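/- arXiv:1012.5489 — 3 statements merged into one kernel-verified Lean document; each statement's English description precedes it below -/
import Mathlib

section
/- Let n ≥ 1 be an integer and let p ≥ 2 be a real number. Then for all vectors a, b ∈ ℝ^n, one has 2^{2-p} |b - a|^p ≤ ⟨ |b|^{p-2} b - |a|^{p-2} a , b - a ⟩, where ⟨·,·⟩ is the Euclidean inner product and |·| the Euclidean norm (with the convention that |v|^{p-2} v = 0 when v = 0). -/
/-!
Write `X = ⟪b, b - a⟫`, `Y = ⟪a, a - b⟫` and `r = ‖b - a‖`. The right-hand side is
`‖b‖^(p-2) X + ‖a‖^(p-2) Y`, with `X + Y = r²`, `X ≤ ‖b‖ r` and `Y ≤ ‖a‖ r`; by symmetry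
`‖a‖ ≤ ‖b‖`, which forces `X ≥ 0`. If `Y ≥ 0`, then `‖b‖^(p-2) X ≥ X^(p-1) / r^(p-2)` and likewise
for `Y`, and convexity of `x ↦ x^(p-1)` gives `X^(p-1) + Y^(p-1) ≥ 2^(2-p) r^(2p-2)`.
If `Y ≤ 0`, then `‖b‖ ≥ r` and the right-hand side is at least `‖b‖^(p-2) (X + Y) ≥ r^p`.
-/

open scoped NNReal RealInnerProductSpace

namespace Real

lemma rpow_add_le_mul_rpow_add_rpow {x y q : ℝ} (hx : 0 ≤ x) (hy : 0 ≤ y) (hq : 1 ≤ q) :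
    (x + y) ^ q ≤ 2 ^ (q - 1) * (x ^ q + y ^ q) := by
  lift x to ℝ≥0 using hx
  lift y to ℝ≥0 using hy
  exact_mod_cast NNReal.rpow_add_le_mul_rpow_add_rpow x y hq

lemma rpow_add_one_le_rpow_mul {x y q : ℝ} (hx : 0 ≤ x) (hxy : x ≤ y) (hq : 0 ≤ q) :
    x ^ (q + 1) ≤ y ^ q * x := by
  rw [rpow_add_one' hx (by linarith)]
  gcongr

end Real

open Real

lemma two_rpow_sub_mul_rpow_le_of_nonneg {p r s t X Y : ℝ} (hp : 2 ≤ p) (hr : 0 ≤ r) (hs : 0 ≤ s)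
    (ht : 0 ≤ t) (hX : 0 ≤ X) (hY : 0 ≤ Y) (hXt : X ≤ t * r) (hYs : Y ≤ s * r)
    (hsum : X + Y = r ^ 2) :
    2 ^ (2 - p) * r ^ p ≤ t ^ (p - 2) * X + s ^ (p - 2) * Y := by
  rcases hr.eq_or_lt with rfl | hr
  · have hX0 : X = 0 := by nlinarith
    have hY0 : Y = 0 := by nlinarith
    simp [hX0, hY0, zero_rpow (by linarith : p ≠ 0)]
  have hXpow := rpow_add_one_le_rpow_mul hX hXt (by linarith : 0 ≤ p - 2)
  have hYpow := rpow_add_one_le_rpow_mul hY hYs (by linarith : 0 ≤ p - 2)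
  have hjensen := rpow_add_le_mul_rpow_add_rpow hX hY (by linarith : 1 ≤ p - 1)
  rw [show p - 2 + 1 = p - 1 by ring] at hXpow hYpow
  rw [show p - 1 - 1 = p - 2 by ring] at hjensen
  refine le_of_mul_le_mul_right ?_ (rpow_pos_of_pos hr (p - 2))
  calc 2 ^ (2 - p) * r ^ p * r ^ (p - 2) = 2 ^ (2 - p) * (X + Y) ^ (p - 1) := by
        rw [mul_assoc, ← rpow_add hr, hsum, ← rpow_natCast_mul hr.le]
        congr 2
        push_cast
        ring
    _ ≤ 2 ^ (2 - p) * (2 ^ (p - 2) * (X ^ (p - 1) + Y ^ (p - 1))) := by gcongr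
    _ = X ^ (p - 1) + Y ^ (p - 1) := by
        rw [← mul_assoc, ← rpow_add two_pos, sub_add_sub_cancel', sub_self, rpow_zero, one_mul]
    _ ≤ (t * r) ^ (p - 2) * X + (s * r) ^ (p - 2) * Y := add_le_add hXpow hYpow
    _ = (t ^ (p - 2) * X + s ^ (p - 2) * Y) * r ^ (p - 2) := by
        rw [mul_rpow ht hr.le, mul_rpow hs hr.le]
        ring

lemma rpow_le_add_of_nonpos {p r s t X Y : ℝ} (hp : 2 ≤ p) (hr : 0 ≤ r) (hs : 0 ≤ s)
    (hst : s ≤ t) (hrt : r ≤ t) (hY : Y ≤ 0) (hsum : X + Y = r ^ 2) :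
    r ^ p ≤ t ^ (p - 2) * X + s ^ (p - 2) * Y := by
  have hq : 0 ≤ p - 2 := by linarith
  have hst' : s ^ (p - 2) ≤ t ^ (p - 2) := by gcongr
  calc r ^ p = r ^ (p - 2) * r ^ 2 := by
        rw [← rpow_natCast, ← rpow_add' hr (by push_cast; linarith)]
        norm_num
    _ ≤ t ^ (p - 2) * r ^ 2 := by gcongr
    _ = t ^ (p - 2) * X + t ^ (p - 2) * Y := by rw [← hsum, mul_add]
    _ ≤ t ^ (p - 2) * X + s ^ (p - 2) * Y := by nlinarith

section InnerProductSpace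

variable {E : Type*} [NormedAddCommGroup E] [InnerProductSpace ℝ E]

lemma inner_rpow_smul_sub_rpow_smul (a b : E) (q : ℝ) :
    ⟪‖b‖ ^ q • b - ‖a‖ ^ q • a, b - a⟫ = ‖b‖ ^ q * ⟪b, b - a⟫ + ‖a‖ ^ q * ⟪a, a - b⟫ := by
  rw [inner_sub_left, real_inner_smul_left, real_inner_smul_left, ← neg_sub b a, inner_neg_right]
  ring

lemma real_inner_sub_add_real_inner_sub (a b : E) : ⟪b, b - a⟫ + ⟪a, a - b⟫ = ‖b - a‖ ^ 2 := by
  rw [← real_inner_self_eq_norm_sq, ← neg_sub b a, inner_neg_right, inner_sub_left]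
  ring

theorem two_rpow_mul_norm_sub_rpow_le_inner {p : ℝ} (hp : 2 ≤ p) (a b : E) :
    2 ^ (2 - p) * ‖b - a‖ ^ p ≤ ⟪‖b‖ ^ (p - 2) • b - ‖a‖ ^ (p - 2) • a, b - a⟫ := by
  wlog hab : ‖a‖ ≤ ‖b‖ generalizing a b
  · have := this b a (le_of_not_ge hab)
    rwa [norm_sub_rev, ← inner_neg_neg, neg_sub, neg_sub] at this
  have hsum := real_inner_sub_add_real_inner_sub a b
  rw [inner_rpow_smul_sub_rpow_smul]
  rcases le_total 0 ⟪a, a - b⟫ with hY | hY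
  · have hX : 0 ≤ ⟪b, b - a⟫ := by
      have := real_inner_le_norm b a
      rw [inner_sub_right, real_inner_self_eq_norm_sq]
      nlinarith [norm_nonneg a]
    refine two_rpow_sub_mul_rpow_le_of_nonneg hp (norm_nonneg _) (norm_nonneg a) (norm_nonneg b)
      hX hY (real_inner_le_norm b _) ?_ hsum
    rw [← norm_sub_rev]
    exact real_inner_le_norm a _
  · have hrb : ‖b - a‖ ≤ ‖b‖ := by
      have := norm_sub_sq_real a (a - b)
      rw [sub_sub_cancel, norm_sub_rev a b] at this
      exact (pow_le_pow_iff_left₀ (norm_nonneg _) (norm_nonneg _) two_ne_zero).1 (by nlinarith)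
    have htwo : (2 : ℝ) ^ (2 - p) ≤ 1 := rpow_le_one_of_one_le_of_nonpos one_le_two (by linarith)
    exact (mul_le_of_le_one_left (by positivity) htwo).trans
      (rpow_le_add_of_nonpos hp (norm_nonneg _) (norm_nonneg a) hab hrb hY hsum)

end InnerProductSpace

theorem pLaplacian_monotonicity_general (n : ℕ) (p : ℝ) (hp : 2 ≤ p)
    (a b : EuclideanSpace ℝ (Fin n)) :
    (2 : ℝ) ^ (2 - p) * ‖b - a‖ ^ p ≤
      (inner ℝ (‖b‖ ^ (p - 2) • b - ‖a‖ ^ (p - 2) • a) (b - a) : ℝ) :=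
  two_rpow_mul_norm_sub_rpow_le_inner hp a b

/-- The elementary monotonicity inequality for the `p`-Laplacian:
`2^{2-p} |b-a|^p ≤ ⟨|b|^{p-2} b - |a|^{p-2} a, b - a⟩` for `p ≥ 2` and `a, b ∈ ℝ^n`. -/
theorem pLaplacian_monotonicity (n : ℕ) (hn : 1 ≤ n) (p : ℝ) (hp : 2 ≤ p)
    (a b : EuclideanSpace ℝ (Fin n)) :
    (2 : ℝ) ^ (2 - p) * ‖b - a‖ ^ p ≤
      (inner ℝ (‖b‖ ^ (p - 2) • b - ‖a‖ ^ (p - 2) • a) (b - a) : ℝ) :=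
  pLaplacian_monotonicity_general n p hp a b
end

section
/- Let N ≥ 2 be an integer. Then the limit M := lim_{n→∞} n ∫_0^1 exp( n ( t^{N/(N-1)} - t ) ) dt exists (as n → ∞ through the positive integers) and satisfies M ≥ 2. -/
open Filter Topology intervalIntegral

/-!
With `p = N / (N - 1)` the phase `f t = t ^ p - t` is convex on `[0, 1]`, vanishes at both ends,
and has one-sided derivatives `-1` at `0` and `p - 1` at `1`. For any such convex phase with
endpoint slopes `-a < 0` and `b > 0`, the mass of `c ∫₀¹ exp (c f)` concentrates at the two
endpoints as `c → ∞`: convexity puts `f` above its tangent lines at `0` and `1` and below its chords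
near them, and the exponentials of these linear bounds integrate explicitly, squeezing
`c ∫₀¹ exp (c f)` to `1 / a + 1 / b`. For `t ^ p - t` this is `1 + (N - 1) = N ≥ 2`.
-/

open Real Set

namespace ConvexOn

variable {S : Set ℝ} {f : ℝ → ℝ} {f' x y t : ℝ}

lemma add_mul_sub_le_of_hasDerivWithinAt_Ioi (hf : ConvexOn ℝ S f) (hx : x ∈ S) (hy : y ∈ S)
    (hxy : x ≤ y) (hf' : HasDerivWithinAt f f' (Ioi x) x) : f x + f' * (y - x) ≤ f y := by
  rcases hxy.eq_or_lt with rfl | hxy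
  · simp
  have := hf.le_slope_of_hasDerivWithinAt_Ioi hx hy hxy hf'
  rw [slope_def_field, le_div_iff₀ (sub_pos.2 hxy)] at this
  linarith

lemma add_mul_sub_le_of_hasDerivWithinAt_Iio (hf : ConvexOn ℝ S f) (hx : x ∈ S) (hy : y ∈ S)
    (hxy : x ≤ y) (hf' : HasDerivWithinAt f f' (Iio y) y) : f y + f' * (x - y) ≤ f x := by
  rcases hxy.eq_or_lt with rfl | hxy
  · simp
  have := hf.slope_le_of_hasDerivWithinAt_Iio hx hy hxy hf'
  rw [slope_def_field, div_le_iff₀ (sub_pos.2 hxy)] at this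
  linarith

lemma le_add_slope_mul_sub_left (hf : ConvexOn ℝ S f) (hx : x ∈ S) (hy : y ∈ S)
    (ht : t ∈ Icc x y) : f t ≤ f x + slope f x y * (t - x) := by
  rcases ht.1.eq_or_lt with rfl | hxt
  · simp
  have := hf.secant_mono hx (hf.1.ordConnected.out hx hy ht) hy hxt.ne' (hxt.trans_le ht.2).ne'
    ht.2
  rw [← slope_def_field f x y, div_le_iff₀ (sub_pos.2 hxt)] at this
  linarith

lemma le_add_slope_mul_sub_right (hf : ConvexOn ℝ S f) (hx : x ∈ S) (hy : y ∈ S)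
    (ht : t ∈ Icc x y) : f t ≤ f y + slope f x y * (t - y) := by
  have := hf.le_add_slope_mul_sub_left hx hy ht
  rcases (ht.1.trans ht.2).eq_or_lt with rfl | hxy
  · simpa using this
  have hslope : slope f x y * (y - x) = f y - f x := by
    rw [slope_def_field, div_mul_cancel₀ _ (sub_pos.2 hxy).ne']
  linarith

end ConvexOn

section ExpIntegrals

variable {a c : ℝ}

lemma mul_integral_exp_mul_neg_mul (hc : c ≠ 0) (ha : a ≠ 0) (x : ℝ) :
    c * ∫ t in (0:ℝ)..x, exp (c * (-a * t)) = (1 - exp (-(c * a * x))) / a := by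
  have hca : -(c * a) ≠ 0 := neg_ne_zero.2 (mul_ne_zero hc ha)
  simp_rw [show ∀ t, c * (-a * t) = -(c * a) * t from fun t => by ring]
  rw [integral_comp_mul_left (fun t => exp t) hca, integral_exp, smul_eq_mul, mul_zero, exp_zero]
  field_simp
  ring_nf

lemma mul_integral_exp_mul_neg_mul_one_sub (hc : c ≠ 0) (ha : a ≠ 0) (x : ℝ) :
    c * ∫ t in (1 - x)..1, exp (c * (-a * (1 - t))) = (1 - exp (-(c * a * x))) / a := by
  rw [integral_comp_sub_left (fun t => exp (c * (-a * t))), sub_self, sub_sub_cancel,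
    mul_integral_exp_mul_neg_mul hc ha]

lemma tendsto_one_sub_exp_neg_mul_div (ha : 0 < a) {x : ℝ} (hx : 0 < x) :
    Tendsto (fun c => (1 - exp (-(c * a * x))) / a) atTop (𝓝 a⁻¹) := by
  have h : Tendsto (fun c => c * a * x) atTop atTop :=
    (tendsto_id.atTop_mul_const ha).atTop_mul_const hx
  simpa using ((tendsto_exp_neg_atTop_nhds_zero.comp h).const_sub 1).div_const a

lemma tendsto_mul_exp_mul_of_neg {m : ℝ} (hm : m < 0) :
    Tendsto (fun c => c * exp (c * m)) atTop (𝓝 0) := by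
  refine (tendsto_rpow_mul_exp_neg_mul_atTop_nhds_zero 1 (-m) (neg_pos.2 hm)).congr fun c => ?_
  rw [rpow_one, neg_neg, mul_comm m]

end ExpIntegrals

section LinearEnvelopes

variable {g : ℝ → ℝ} {a b c : ℝ}

lemma intervalIntegrable_exp_mul_of_continuousOn (hg : ContinuousOn g (Icc 0 1)) (c : ℝ)
    {x y : ℝ} (hx : x ∈ Icc (0:ℝ) 1) (hy : y ∈ Icc (0:ℝ) 1) :
    IntervalIntegrable (fun t => exp (c * g t)) MeasureTheory.volume x y :=
  ((continuous_exp.comp_continuousOn (continuousOn_const.mul hg)).mono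
    (ordConnected_Icc.uIcc_subset hx hy)).intervalIntegrable

lemma le_mul_integral_exp_mul (hg : ContinuousOn g (Icc 0 1)) (ha : a ≠ 0) (hb : b ≠ 0)
    (hc : 0 < c) (hga : ∀ t ∈ Icc (0:ℝ) 1, -a * t ≤ g t)
    (hgb : ∀ t ∈ Icc (0:ℝ) 1, -b * (1 - t) ≤ g t) :
    (1 - exp (-(c * a * (1 / 2)))) / a + (1 - exp (-(c * b * (1 / 2)))) / b
      ≤ c * ∫ t in (0:ℝ)..1, exp (c * g t) := by
  have h0 : (0:ℝ) ∈ Icc (0:ℝ) 1 := by norm_num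
  have hhalf : (1 / 2 : ℝ) ∈ Icc (0:ℝ) 1 := by norm_num
  have h1 : (1:ℝ) ∈ Icc (0:ℝ) 1 := by norm_num
  have hleft : ∫ t in (0:ℝ)..(1 / 2), exp (c * (-a * t))
      ≤ ∫ t in (0:ℝ)..(1 / 2), exp (c * g t) :=
    integral_mono_on (by norm_num)
      ((by fun_prop : Continuous fun t => exp (c * (-a * t))).intervalIntegrable _ _)
      (intervalIntegrable_exp_mul_of_continuousOn hg c h0 hhalf) fun t ht =>
        exp_le_exp.2 (mul_le_mul_of_nonneg_left (hga t ⟨ht.1, ht.2.trans (by norm_num)⟩) hc.le)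
  have hright : ∫ t in (1 / 2 : ℝ)..1, exp (c * (-b * (1 - t)))
      ≤ ∫ t in (1 / 2 : ℝ)..1, exp (c * g t) :=
    integral_mono_on (by norm_num)
      ((by fun_prop : Continuous fun t => exp (c * (-b * (1 - t)))).intervalIntegrable _ _)
      (intervalIntegrable_exp_mul_of_continuousOn hg c hhalf h1) fun t ht =>
        exp_le_exp.2 (mul_le_mul_of_nonneg_left (hgb t ⟨le_trans (by norm_num) ht.1, ht.2⟩) hc.le)
  rw [← mul_integral_exp_mul_neg_mul hc.ne' ha, ← mul_integral_exp_mul_neg_mul_one_sub hc.ne' hb,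
    ← integral_add_adjacent_intervals (intervalIntegrable_exp_mul_of_continuousOn hg c h0 hhalf)
      (intervalIntegrable_exp_mul_of_continuousOn hg c hhalf h1), mul_add,
    show (1:ℝ) - 1 / 2 = 1 / 2 by norm_num]
  gcongr

lemma mul_integral_exp_mul_le {m : ℝ} (hg : ContinuousOn g (Icc 0 1)) (ha : 0 < a) (hb : 0 < b)
    (hc : 0 < c) (hg_le : ∀ t ∈ Icc (0:ℝ) 1, g t ≤ -a * t ∨ g t ≤ m ∨ g t ≤ -b * (1 - t)) :
    c * ∫ t in (0:ℝ)..1, exp (c * g t) ≤ a⁻¹ + c * exp (c * m) + b⁻¹ := by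
  have hA : IntervalIntegrable (fun t => exp (c * (-a * t))) MeasureTheory.volume 0 1 :=
    (by fun_prop : Continuous _).intervalIntegrable 0 1
  have hM : IntervalIntegrable (fun _ => exp (c * m)) MeasureTheory.volume 0 1 :=
    continuous_const.intervalIntegrable 0 1
  have hB : IntervalIntegrable (fun t => exp (c * (-b * (1 - t)))) MeasureTheory.volume 0 1 :=
    (by fun_prop : Continuous _).intervalIntegrable 0 1
  have hpointwise : ∫ t in (0:ℝ)..1, exp (c * g t) ≤ ∫ t in (0:ℝ)..1,
      (exp (c * (-a * t)) + exp (c * m) + exp (c * (-b * (1 - t)))) := by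
    refine integral_mono_on zero_le_one (intervalIntegrable_exp_mul_of_continuousOn hg c
      (by norm_num) (by norm_num)) ((hA.add hM).add hB) fun t ht => ?_
    have hA_pos := exp_pos (c * (-a * t))
    have hM_pos := exp_pos (c * m)
    have hB_pos := exp_pos (c * (-b * (1 - t)))
    rcases hg_le t ht with h | h | h <;>
      have := exp_le_exp.2 (mul_le_mul_of_nonneg_left h hc.le) <;> linarith
  have hA_le : c * ∫ t in (0:ℝ)..1, exp (c * (-a * t)) ≤ a⁻¹ := by
    rw [mul_integral_exp_mul_neg_mul hc.ne' ha.ne', div_le_iff₀ ha, inv_mul_cancel₀ ha.ne']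
    linarith [exp_pos (-(c * a * 1))]
  have hB_le : c * ∫ t in (0:ℝ)..1, exp (c * (-b * (1 - t))) ≤ b⁻¹ := by
    have := mul_integral_exp_mul_neg_mul_one_sub hc.ne' hb.ne' 1
    rw [sub_self] at this
    rw [this, div_le_iff₀ hb, inv_mul_cancel₀ hb.ne']
    linarith [exp_pos (-(c * b * 1))]
  calc c * ∫ t in (0:ℝ)..1, exp (c * g t)
      ≤ c * ∫ t in (0:ℝ)..1,
          (exp (c * (-a * t)) + exp (c * m) + exp (c * (-b * (1 - t)))) :=
        mul_le_mul_of_nonneg_left hpointwise hc.le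
    _ = c * (∫ t in (0:ℝ)..1, exp (c * (-a * t))) + c * exp (c * m)
          + c * ∫ t in (0:ℝ)..1, exp (c * (-b * (1 - t))) := by
      rw [integral_add (hA.add hM) hB, integral_add hA hM, integral_const]
      simp only [sub_zero, one_smul]
      ring
    _ ≤ a⁻¹ + c * exp (c * m) + b⁻¹ := by gcongr

end LinearEnvelopes

section ConvexPhase

variable {f : ℝ → ℝ} {a b c : ℝ}

lemma le_mul_integral_exp_mul_of_convexOn (hf : ConvexOn ℝ (Icc 0 1) f)
    (hcont : ContinuousOn f (Icc 0 1)) (h0 : f 0 = 0) (h1 : f 1 = 0) (ha : a ≠ 0) (hb : b ≠ 0)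
    (hf0 : HasDerivWithinAt f (-a) (Ioi 0) 0) (hf1 : HasDerivWithinAt f b (Iio 1) 1)
    (hc : 0 < c) :
    (1 - exp (-(c * a * (1 / 2)))) / a + (1 - exp (-(c * b * (1 / 2)))) / b
      ≤ c * ∫ t in (0:ℝ)..1, exp (c * f t) := by
  refine le_mul_integral_exp_mul hcont ha hb hc (fun t ht => ?_) (fun t ht => ?_)
  · have := hf.add_mul_sub_le_of_hasDerivWithinAt_Ioi (left_mem_Icc.2 zero_le_one) ht ht.1 hf0
    rw [h0] at this
    linarith
  · have := hf.add_mul_sub_le_of_hasDerivWithinAt_Iio ht (right_mem_Icc.2 zero_le_one) ht.2 hf1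
    rw [h1] at this
    linarith

lemma mul_integral_exp_mul_le_of_convexOn (hf : ConvexOn ℝ (Icc 0 1) f)
    (hcont : ContinuousOn f (Icc 0 1)) (h0 : f 0 = 0) (h1 : f 1 = 0) {s u : ℝ} (hs : 0 < s)
    (hsu : s < u) (hu : u < 1) (hfs : slope f 0 s < 0) (hfu : 0 < slope f u 1) (hc : 0 < c) :
    c * ∫ t in (0:ℝ)..1, exp (c * f t)
      ≤ (-slope f 0 s)⁻¹ + c * exp (c * max (f s) (f u)) + (slope f u 1)⁻¹ := by
  have hs_mem : s ∈ Icc (0:ℝ) 1 := ⟨hs.le, (hsu.trans hu).le⟩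
  have hu_mem : u ∈ Icc (0:ℝ) 1 := ⟨hs.le.trans hsu.le, hu.le⟩
  refine mul_integral_exp_mul_le hcont (neg_pos.2 hfs) hfu hc fun t ht => ?_
  rcases le_total t s with hts | hst
  · have := hf.le_add_slope_mul_sub_left (left_mem_Icc.2 zero_le_one) hs_mem ⟨ht.1, hts⟩
    rw [h0] at this
    left; linarith
  rcases le_total t u with htu | hut
  · exact Or.inr <| Or.inl <| hf.le_on_segment hs_mem hu_mem <| by
      rw [segment_eq_Icc hsu.le]; exact ⟨hst, htu⟩
  · have := hf.le_add_slope_mul_sub_right hu_mem (right_mem_Icc.2 zero_le_one) ⟨hut, ht.2⟩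
    rw [h1] at this
    right; right; linarith

lemma eventually_mul_integral_exp_mul_lt_of_convexOn (hf : ConvexOn ℝ (Icc 0 1) f)
    (hcont : ContinuousOn f (Icc 0 1)) (h0 : f 0 = 0) (h1 : f 1 = 0) (ha : 0 < a) (hb : 0 < b)
    (hf0 : HasDerivWithinAt f (-a) (Ioi 0) 0) (hf1 : HasDerivWithinAt f b (Iio 1) 1) {x : ℝ}
    (hx : a⁻¹ + b⁻¹ < x) :
    ∀ᶠ c in atTop, c * ∫ t in (0:ℝ)..1, exp (c * f t) < x := by
  set ε := (x - (a⁻¹ + b⁻¹)) / 3 with hε_def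
  have hε : 0 < ε := by rw [hε_def]; linarith
  have hslope0 := (hasDerivWithinAt_iff_tendsto_slope' self_notMem_Ioi).mp hf0
  have hslope1 : Tendsto (fun u => slope f u 1) (𝓝[<] 1) (𝓝 b) :=
    ((hasDerivWithinAt_iff_tendsto_slope' self_notMem_Iio).mp hf1).congr (slope_comm f 1)
  have hinv0 : Tendsto (fun s => (-slope f 0 s)⁻¹) (𝓝[>] 0) (𝓝 a⁻¹) := by
    simpa using hslope0.neg.inv₀ (by simpa using ha.ne')
  obtain ⟨s, hs_inv, hs_neg, hs, hs_half⟩ :=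
    ((hinv0.eventually (gt_mem_nhds (lt_add_of_pos_right _ hε))).and
      ((hslope0.eventually (gt_mem_nhds (neg_lt_zero.2 ha))).and
        (Ioo_mem_nhdsGT one_half_pos))).exists
  obtain ⟨u, hu_inv, hu_pos, hu_half, hu⟩ :=
    (((hslope1.inv₀ hb.ne').eventually (gt_mem_nhds (lt_add_of_pos_right _ hε))).and
      ((hslope1.eventually (lt_mem_nhds hb)).and (Ioo_mem_nhdsLT one_half_lt_one))).exists
  have hfs : f s < 0 := by
    have := sub_smul_slope f 0 s
    rw [smul_eq_mul, vsub_eq_sub, h0] at this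
    nlinarith
  have hfu : f u < 0 := by
    have := sub_smul_slope f u 1
    rw [smul_eq_mul, vsub_eq_sub, h1] at this
    nlinarith
  filter_upwards [(tendsto_mul_exp_mul_of_neg (max_lt hfs hfu)).eventually (gt_mem_nhds hε),
    eventually_gt_atTop 0] with c hc_exp hc
  have := mul_integral_exp_mul_le_of_convexOn hf hcont h0 h1 hs (hs_half.trans hu_half) hu hs_neg
    hu_pos hc
  linarith

theorem tendsto_mul_integral_exp_mul_of_convexOn (hf : ConvexOn ℝ (Icc 0 1) f)
    (hcont : ContinuousOn f (Icc 0 1)) (h0 : f 0 = 0) (h1 : f 1 = 0) (ha : 0 < a) (hb : 0 < b)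
    (hf0 : HasDerivWithinAt f (-a) (Ioi 0) 0) (hf1 : HasDerivWithinAt f b (Iio 1) 1) :
    Tendsto (fun c => c * ∫ t in (0:ℝ)..1, exp (c * f t)) atTop (𝓝 (a⁻¹ + b⁻¹)) := by
  refine tendsto_order.2 ⟨fun x hx => ?_,
    fun x hx => eventually_mul_integral_exp_mul_lt_of_convexOn hf hcont h0 h1 ha hb hf0 hf1 hx⟩
  have hlower := (tendsto_one_sub_exp_neg_mul_div ha one_half_pos).add
    (tendsto_one_sub_exp_neg_mul_div hb one_half_pos)
  filter_upwards [hlower.eventually_const_lt hx, eventually_gt_atTop 0] with c hxc hc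
  exact hxc.trans_le (le_mul_integral_exp_mul_of_convexOn hf hcont h0 h1 ha.ne' hb.ne' hf0 hf1 hc)

end ConvexPhase

section RpowSubSelf

variable {p : ℝ}

lemma convexOn_rpow_sub_self (hp : 1 ≤ p) : ConvexOn ℝ (Ici 0) fun t : ℝ => t ^ p - t :=
  (convexOn_rpow hp).sub (concaveOn_id (convex_Ici 0))

lemma hasDerivAt_rpow_sub_self (hp : 1 ≤ p) (x : ℝ) :
    HasDerivAt (fun t : ℝ => t ^ p - t) (p * x ^ (p - 1) - 1) x :=
  (hasDerivAt_rpow_const (Or.inr hp)).sub (hasDerivAt_id x)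

theorem tendsto_mul_integral_exp_mul_rpow_sub_self (hp : 1 < p) :
    Tendsto (fun c => c * ∫ t in (0:ℝ)..1, exp (c * (t ^ p - t))) atTop (𝓝 (p / (p - 1))) := by
  have hp0 : p ≠ 0 := by positivity
  have hp1 : p - 1 ≠ 0 := (sub_pos.2 hp).ne'
  have hderiv0 := hasDerivAt_rpow_sub_self hp.le 0
  have hderiv1 := hasDerivAt_rpow_sub_self hp.le 1
  rw [zero_rpow hp1, mul_zero, zero_sub] at hderiv0
  rw [one_rpow, mul_one] at hderiv1
  have h := tendsto_mul_integral_exp_mul_of_convexOn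
    ((convexOn_rpow_sub_self hp.le).subset Icc_subset_Ici_self (convex_Icc 0 1))
    ((continuous_id.rpow_const fun _ => Or.inr (zero_le_one.trans hp.le)).sub
      continuous_id).continuousOn
    (by simp [zero_rpow hp0]) (by simp) one_pos (sub_pos.2 hp)
    hderiv0.hasDerivWithinAt hderiv1.hasDerivWithinAt
  convert h using 2
  field_simp
  ring

end RpowSubSelf

/-- The limit `M = lim_{n→∞} n ∫_0^1 exp(n(t^{N/(N-1)} - t)) dt` exists and `M ≥ 2`. -/
theorem limit_moser_integral (N : ℕ) (hN : 2 ≤ N) :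
    ∃ M : ℝ, 2 ≤ M ∧
      Tendsto (fun n : ℕ =>
          (n : ℝ) * ∫ t in (0:ℝ)..1, Real.exp ((n : ℝ) * (t ^ ((N : ℝ) / ((N : ℝ) - 1)) - t)))
        atTop (𝓝 M) := by
  have hN' : (2:ℝ) ≤ N := by exact_mod_cast hN
  have hp : 1 < (N:ℝ) / (N - 1) := by
    rw [one_lt_div (by linarith)]
    linarith
  have hlimit : (N:ℝ) / (N - 1) / ((N:ℝ) / (N - 1) - 1) = N := by
    have hN1 : (N:ℝ) - 1 ≠ 0 := by linarith
    field_simp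
    ring
  have h := (tendsto_mul_integral_exp_mul_rpow_sub_self hp).comp tendsto_natCast_atTop_atTop
  rw [hlimit] at h
  exact ⟨N, hN', h⟩
end

section
/- Let N ≥ 2 be an integer, let Ω ⊂ ℝ^N be a bounded open set with closure Ω̄, and let f : Ω̄ × ℝ → ℝ be continuous with f(x,s) ≥ 0 for s ≥ 0 and f(x,s) = 0 for s ≤ 0; set F(x,u) = ∫_0^u f(x,t) dt. Let λ_1 > 0 be a constant. Assume: (SCE) for every α > 0, f(x,u)·exp(−α u^{N/(N-1)}) → 0 as u → +∞, uniformly in x ∈ Ω̄; and (L4) there exist μ < λ_1 and δ > 0 such that N F(x,u) ≤ μ u^N for all x ∈ Ω̄ and 0 < u ≤ δ. Then there exist constants κ > 0, τ > 0, C > 0 and q > N such that F(x,s) ≤ (1/N)(λ_1 − τ)|s|^N + C·exp(κ|s|^{N/(N-1)})·|s|^q for all x ∈ Ω̄ and s ∈ ℝ. -/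
/-!
Below the threshold `δ` of (L4) the estimate is (L4) itself, with `τ` small enough that
`μ ≤ λ₁ - τ`. Above it, compactness of `Ω̄ × [0, T]` together with (SCE) for `α = 1` gives
`f(x,t) ≤ M + exp(s^{N/(N-1)})` for `0 ≤ t ≤ s`, hence `F(x,s) ≤ (M + exp(s^{N/(N-1)})) s`,
and `s ≥ δ` turns the factor `s` into `s^{N+1} / δ^N`. For `s ≤ 0`, `F(x,s) = 0`.
-/

theorem intervalIntegral_le_mul_of_le {g : ℝ → ℝ} (hg : Continuous g) {s c : ℝ} (hs : 0 ≤ s)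
    (hgc : ∀ t ∈ Set.Icc 0 s, g t ≤ c) : ∫ t in (0 : ℝ)..s, g t ≤ c * s := by
  calc ∫ t in (0 : ℝ)..s, g t ≤ ∫ _ in (0 : ℝ)..s, c :=
        intervalIntegral.integral_mono_on hs (hg.intervalIntegrable 0 s)
          intervalIntegrable_const hgc
    _ = c * s := by simp [mul_comm]

theorem intervalIntegral_eq_zero_of_nonpos {g : ℝ → ℝ} (hg : ∀ t ≤ 0, g t = 0) {s : ℝ}
    (hs : s ≤ 0) : ∫ t in (0 : ℝ)..s, g t = 0 := by
  rw [intervalIntegral.integral_congr (g := fun _ => (0 : ℝ)) fun t ht =>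
    hg t (by rw [Set.uIcc_of_ge hs] at ht; exact ht.2)]
  simp

section SubcriticalGrowth

variable {X : Type*} [TopologicalSpace X] {K : Set X} {f : X → ℝ → ℝ}

theorem continuous_of_continuousOn_prod_univ
    (hfc : ContinuousOn (fun q : X × ℝ => f q.1 q.2) (K ×ˢ Set.univ)) {x : X} (hx : x ∈ K) :
    Continuous (f x) :=
  continuousOn_univ.mp <|
    hfc.comp (Continuous.prodMk_right x).continuousOn fun _ _ => ⟨hx, trivial⟩

variable (hK : IsCompact K) (hfc : ContinuousOn (fun q : X × ℝ => f q.1 q.2) (K ×ˢ Set.univ))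
  {α γ T : ℝ} (hα : 0 ≤ α) (hγ : 0 ≤ γ)
  (hT : ∀ x ∈ K, ∀ u : ℝ, T ≤ u → f x u * Real.exp (-α * u ^ γ) ≤ 1)
include hK hfc hα hγ hT

theorem exists_le_const_add_exp_of_subcritical :
    ∃ M ≥ (0 : ℝ), ∀ x ∈ K, ∀ s t : ℝ, 0 ≤ t → t ≤ s →
      f x t ≤ M + Real.exp (α * s ^ γ) := by
  obtain ⟨M₀, hM₀⟩ := (hK.prod (isCompact_Icc (a := 0) (b := T))).bddAbove_image
    (hfc.mono fun q hq => ⟨hq.1, trivial⟩)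
  refine ⟨max M₀ 0, le_max_right _ _, fun x hx s t ht hts => ?_⟩
  have hexp_mono : Real.exp (α * t ^ γ) ≤ Real.exp (α * s ^ γ) := by gcongr
  rcases le_or_gt t T with htT | hTt
  · have hfM₀ : f x t ≤ M₀ := hM₀ ⟨(x, t), ⟨hx, ht, htT⟩, rfl⟩
    linarith [le_max_left M₀ 0, Real.exp_pos (α * s ^ γ)]
  · have hf_exp : f x t ≤ Real.exp (α * t ^ γ) := by
      have h := hT x hx t hTt.le
      rwa [neg_mul, Real.exp_neg, ← div_eq_mul_inv, div_le_one (Real.exp_pos _)] at h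
    linarith [le_max_right M₀ 0]

theorem exists_intervalIntegral_le_of_subcritical :
    ∃ M ≥ (0 : ℝ), ∀ x ∈ K, ∀ s : ℝ, 0 ≤ s →
      ∫ t in (0 : ℝ)..s, f x t ≤ (M + Real.exp (α * s ^ γ)) * s := by
  obtain ⟨M, hM, hfM⟩ := exists_le_const_add_exp_of_subcritical hK hfc hα hγ hT
  exact ⟨M, hM, fun x hx s hs => intervalIntegral_le_mul_of_le
    (continuous_of_continuousOn_prod_univ hfc hx) hs fun t ht => hfM x hx s t ht.1 ht.2⟩

end SubcriticalGrowth

theorem le_one_div_mul_mul_of_mul_le {n a b μ c : ℝ} (hn : 0 < n) (hb : 0 ≤ b) (hμc : μ ≤ c)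
    (h : n * a ≤ μ * b) : a ≤ 1 / n * c * b := by
  rw [one_div_mul_eq_div, div_mul_eq_mul_div, le_div_iff₀ hn, mul_comm]
  exact h.trans (mul_le_mul_of_nonneg_right hμc hb)

theorem const_add_mul_le_mul_rpow {M E δ s : ℝ} (n : ℕ) (hM : 0 ≤ M) (hE : 1 ≤ E)
    (hδ : 0 < δ) (hδs : δ ≤ s) :
    (M + E) * s ≤ (M + 1) / δ ^ n * E * s ^ ((n : ℝ) + 1) := by
  have hs : 0 < s := hδ.trans_le hδs
  have hME : M + E ≤ (M + 1) * E := by nlinarith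
  have hsδ : 1 ≤ (s / δ) ^ n := one_le_pow₀ ((one_le_div hδ).mpr hδs)
  calc (M + E) * s ≤ (M + 1) * E * s * (s / δ) ^ n := by
        rw [mul_assoc _ s]
        gcongr
        exact le_mul_of_one_le_right hs.le hsδ
    _ = (M + 1) / δ ^ n * E * s ^ ((n : ℝ) + 1) := by
        rw [Real.rpow_add hs, Real.rpow_one, Real.rpow_natCast, div_pow]
        field_simp

theorem SCE_L4_growth_estimate_general (N : ℕ) (hN : 2 ≤ N)
    (Ω : Set (EuclideanSpace ℝ (Fin N))) (hΩb : Bornology.IsBounded Ω)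
    (f : EuclideanSpace ℝ (Fin N) → ℝ → ℝ)
    (hfc : ContinuousOn (fun q : (EuclideanSpace ℝ (Fin N)) × ℝ => f q.1 q.2)
      ((closure Ω) ×ˢ (Set.univ : Set ℝ)))
    (hfzero : ∀ x ∈ closure Ω, ∀ s : ℝ, s ≤ 0 → f x s = 0)
    (F : EuclideanSpace ℝ (Fin N) → ℝ → ℝ)
    (hF : ∀ x : EuclideanSpace ℝ (Fin N), ∀ u : ℝ, F x u = ∫ t in (0:ℝ)..u, f x t)
    (lam₁ : ℝ) (hlam₁ : 0 < lam₁)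
    -- (SCE): subcritical exponential growth, uniformly in x
    (hSCE : ∀ α > (0 : ℝ), ∀ ε > (0 : ℝ), ∃ T > (0 : ℝ), ∀ x ∈ closure Ω, ∀ u : ℝ, T ≤ u →
      f x u * Real.exp (-α * u ^ ((N : ℝ) / ((N : ℝ) - 1))) ≤ ε)
    -- (L4)
    (hL4 : ∃ μ < lam₁, ∃ δ > (0 : ℝ), ∀ x ∈ closure Ω, ∀ u : ℝ, 0 < u → u ≤ δ →
      (N : ℝ) * F x u ≤ μ * u ^ N) :
    ∃ κ > (0 : ℝ), ∃ τ > (0 : ℝ), ∃ C > (0 : ℝ), ∃ q : ℝ, (N : ℝ) < q ∧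
      ∀ x ∈ closure Ω, ∀ s : ℝ,
        F x s ≤ (1 / (N : ℝ)) * (lam₁ - τ) * |s| ^ N +
          C * Real.exp (κ * |s| ^ ((N : ℝ) / ((N : ℝ) - 1))) * |s| ^ q := by
  obtain ⟨μ, hμ, δ, hδ, hL⟩ := hL4
  have hN' : (2 : ℝ) ≤ N := by exact_mod_cast hN
  obtain ⟨T, -, hT⟩ := hSCE 1 one_pos 1 one_pos
  obtain ⟨M, hM, hFM⟩ := exists_intervalIntegral_le_of_subcritical hΩb.isCompact_closure hfc
    zero_le_one (div_nonneg (by linarith) (by linarith)) hT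
  set τ := min (lam₁ / 2) ((lam₁ - μ) / 2)
  have hμτ : μ ≤ lam₁ - τ := by linarith [min_le_right (lam₁ / 2) ((lam₁ - μ) / 2)]
  have hτ : 0 ≤ lam₁ - τ := by linarith [min_le_left (lam₁ / 2) ((lam₁ - μ) / 2)]
  refine ⟨1, one_pos, τ, lt_min (by linarith) (by linarith), (M + 1) / δ ^ N, by positivity,
    N + 1, by linarith, fun x hx s => ?_⟩
  have hsmall : 0 ≤ (1 / (N : ℝ)) * (lam₁ - τ) * |s| ^ N := by positivity
  have hlarge : 0 ≤ (M + 1) / δ ^ N * Real.exp (1 * |s| ^ ((N : ℝ) / ((N : ℝ) - 1))) *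
      |s| ^ ((N : ℝ) + 1) := by positivity
  rcases le_or_gt s 0 with hs | hs
  · rw [hF, intervalIntegral_eq_zero_of_nonpos (fun t ht => hfzero x hx t ht) hs]
    linarith
  rw [abs_of_pos hs] at hsmall hlarge ⊢
  rcases le_or_gt s δ with hsδ | hδs
  · have hFs : F x s ≤ (1 / (N : ℝ)) * (lam₁ - τ) * s ^ N :=
      le_one_div_mul_mul_of_mul_le (by linarith) (by positivity) hμτ (hL x hx s hs hsδ)
    linarith
  · calc F x s ≤ (M + Real.exp (1 * s ^ ((N : ℝ) / ((N : ℝ) - 1)))) * s :=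
          hF x s ▸ hFM x hx s hs.le
      _ ≤ (M + 1) / δ ^ N * Real.exp (1 * s ^ ((N : ℝ) / ((N : ℝ) - 1))) * s ^ ((N : ℝ) + 1) :=
          const_add_mul_le_mul_rpow N hM (Real.one_le_exp (by positivity)) hδ hδs.le
      _ ≤ _ := by linarith

/-- Under (SCE) and (L4) there are `κ, τ, C > 0` and `q > N` with
`F(x,s) ≤ (1/N)(λ₁ - τ)|s|^N + C exp(κ|s|^{N/(N-1)})|s|^q` for all `x ∈ Ω̄`, `s ∈ ℝ`. -/
theorem SCE_L4_growth_estimate (N : ℕ) (hN : 2 ≤ N)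
    (Ω : Set (EuclideanSpace ℝ (Fin N))) (hΩo : IsOpen Ω) (hΩb : Bornology.IsBounded Ω)
    (f : EuclideanSpace ℝ (Fin N) → ℝ → ℝ)
    (hfc : ContinuousOn (fun q : (EuclideanSpace ℝ (Fin N)) × ℝ => f q.1 q.2)
      ((closure Ω) ×ˢ (Set.univ : Set ℝ)))
    (hfnonneg : ∀ x ∈ closure Ω, ∀ s : ℝ, 0 ≤ s → 0 ≤ f x s)
    (hfzero : ∀ x ∈ closure Ω, ∀ s : ℝ, s ≤ 0 → f x s = 0)
    (F : EuclideanSpace ℝ (Fin N) → ℝ → ℝ)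
    (hF : ∀ x : EuclideanSpace ℝ (Fin N), ∀ u : ℝ, F x u = ∫ t in (0:ℝ)..u, f x t)
    (lam₁ : ℝ) (hlam₁ : 0 < lam₁)
    -- (SCE): subcritical exponential growth, uniformly in x
    (hSCE : ∀ α > (0 : ℝ), ∀ ε > (0 : ℝ), ∃ T > (0 : ℝ), ∀ x ∈ closure Ω, ∀ u : ℝ, T ≤ u →
      f x u * Real.exp (-α * u ^ ((N : ℝ) / ((N : ℝ) - 1))) ≤ ε)
    -- (L4)
    (hL4 : ∃ μ < lam₁, ∃ δ > (0 : ℝ), ∀ x ∈ closure Ω, ∀ u : ℝ, 0 < u → u ≤ δ →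
      (N : ℝ) * F x u ≤ μ * u ^ N) :
    ∃ κ > (0 : ℝ), ∃ τ > (0 : ℝ), ∃ C > (0 : ℝ), ∃ q : ℝ, (N : ℝ) < q ∧
      ∀ x ∈ closure Ω, ∀ s : ℝ,
        F x s ≤ (1 / (N : ℝ)) * (lam₁ - τ) * |s| ^ N +
          C * Real.exp (κ * |s| ^ ((N : ℝ) / ((N : ℝ) - 1))) * |s| ^ q :=
  SCE_L4_growth_estimate_general N hN Ω hΩb f hfc hfzero F hF lam₁ hlam₁ hSCE hL4
end
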